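/- arXiv:math/0701188 — 3 statements merged into one kernel-verified Lean document; each statement's English description precedes it below -/
import Mathlib

section
/- For every natural number j ≥ 2, the Wilson-type prime indicator F(j) = ⌊cos²(π·((j-1)! + 1)/j)⌋ (with the real cosine, real division, and floor function) equals 1 if j is prime and equals 0 if j is not prime. -/
/-! Since `cos² θ = 1 - sin² θ`, the floor `⌊cos² θ⌋` is `1` when `sin θ = 0` and `0` otherwise.
For `θ = π·((j-1)! + 1)/j` the sine vanishes exactly when `j ∣ (j-1)! + 1`, which by Wilson's
theorem means that `j` is prime. -/

open Real

/-- The Wilson-type prime indicator `F(j) = ⌊cos²(π·((j-1)! + 1)/j)⌋`. -/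
noncomputable def F (j : ℕ) : ℤ :=
  ⌊(Real.cos (Real.pi * (((Nat.factorial (j - 1) : ℝ) + 1) / (j : ℝ)))) ^ 2⌋

open Nat in
theorem Nat.prime_iff_dvd_factorial_sub_one_add_one {n : ℕ} (hn : n ≠ 1) :
    n.Prime ↔ n ∣ (n - 1)! + 1 := by
  rw [Nat.prime_iff_fac_equiv_neg_one hn, ← ZMod.natCast_eq_zero_iff]
  push_cast
  exact eq_neg_iff_add_eq_zero

theorem Real.sin_pi_mul_eq_zero_iff {x : ℝ} : sin (π * x) = 0 ↔ ∃ n : ℤ, x = n := by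
  rw [Real.sin_eq_zero_iff]
  refine exists_congr fun n => ⟨fun h => ?_, fun h => by rw [h, mul_comm]⟩
  exact (mul_left_cancel₀ pi_ne_zero (by rw [← h, mul_comm])).symm

theorem exists_int_eq_natCast_div_iff_dvd {m j : ℕ} (hj : j ≠ 0) :
    (∃ n : ℤ, (m : ℝ) / j = n) ↔ j ∣ m := by
  have hj' : (j : ℝ) ≠ 0 := Nat.cast_ne_zero.mpr hj
  constructor
  · rintro ⟨n, hn⟩
    rw [div_eq_iff hj'] at hn
    have : (m : ℤ) = n * j := by exact_mod_cast hn
    exact Int.natCast_dvd_natCast.mp ⟨n, by rw [this, mul_comm]⟩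
  · rintro ⟨k, rfl⟩
    exact ⟨k, by push_cast; field_simp⟩

theorem Real.floor_cos_sq_eq_one_of_sin_eq_zero {θ : ℝ} (h : sin θ = 0) : ⌊cos θ ^ 2⌋ = 1 := by
  rw [cos_sq', h]
  norm_num

theorem Real.floor_cos_sq_eq_zero_of_sin_ne_zero {θ : ℝ} (h : sin θ ≠ 0) : ⌊cos θ ^ 2⌋ = 0 := by
  rw [Int.floor_eq_zero_iff, cos_sq']
  constructor <;> linarith [sq_pos_of_ne_zero h, sin_sq_le_one θ]

/-- For `j ≥ 2`, the indicator `F j` equals 1 if `j` is prime and 0 otherwise. -/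
theorem F_eq_one_iff_prime (j : ℕ) (hj : 2 ≤ j) :
    (j.Prime → F j = 1) ∧ (¬ j.Prime → F j = 0) := by
  have sin_eq_zero_iff_prime :
      sin (π * ((((j - 1).factorial : ℝ) + 1) / j)) = 0 ↔ j.Prime := by
    rw [Nat.prime_iff_dvd_factorial_sub_one_add_one (by omega),
      ← exists_int_eq_natCast_div_iff_dvd (by omega : j ≠ 0), ← Real.sin_pi_mul_eq_zero_iff]
    push_cast
    rfl
  rw [← sin_eq_zero_iff_prime, F]
  exact ⟨floor_cos_sq_eq_one_of_sin_eq_zero, floor_cos_sq_eq_zero_of_sin_ne_zero⟩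
end

section
/- For every natural number n ≥ 3, the even number 2n is a sum of two primes if and only if there exists an index i with 1 ≤ i ≤ |I_n| such that cos²(π·((2i)! + 1)/(2i+1)) · cos²(π·((2n-2-2i)! + 1)/(2n-1-2i)) = 1, where all quotients are real-number divisions. -/
open Real

/-- `In n = |I_n|`, the number of unordered representations of `2n` as a sum
of two odd numbers both at least 3. -/
def In (n : ℕ) : ℕ := (n - 2 + n % 2) / 2

lemma cos_sq_pi_div_eq_one_iff (b m : ℕ) (hm : 0 < m) :
    (Real.cos (Real.pi * ((b : ℝ) / (m : ℝ)))) ^ 2 = 1 ↔ m ∣ b := by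
  set x := Real.pi * ((b : ℝ) / (m : ℝ)) with hx
  have hsin : (Real.cos x) ^ 2 = 1 ↔ Real.sin x = 0 := by
    have hpyth := Real.sin_sq_add_cos_sq x
    constructor
    · intro h
      have hs : Real.sin x ^ 2 = 0 := by linarith
      exact pow_eq_zero_iff (by norm_num) |>.mp hs
    · intro h
      rw [h] at hpyth; simpa using hpyth
  rw [hsin, Real.sin_eq_zero_iff]
  have hm' : (m : ℝ) ≠ 0 := by positivity
  constructor
  · rintro ⟨k, hk⟩
    have hkb : (k : ℝ) = (b : ℝ) / m :=
      mul_left_cancel₀ Real.pi_ne_zero (by rw [← hx, ← hk]; ring)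
    have hkm : (k : ℝ) * m = b := by
      field_simp at hkb; linarith
    have hk0 : 0 ≤ k := by
      have : (0:ℝ) ≤ (k:ℝ) := by
        rw [hkb]; positivity
      exact_mod_cast this
    refine ⟨k.toNat, ?_⟩
    have : ((k.toNat : ℕ) : ℝ) * m = b := by
      rw [show ((k.toNat : ℕ) : ℝ) = (k : ℝ) by exact_mod_cast Int.toNat_of_nonneg hk0]
      exact hkm
    have := this
    exact_mod_cast (by linarith [this] : (b:ℝ) = m * k.toNat)
  · rintro ⟨c, rfl⟩
    refine ⟨c, ?_⟩
    rw [hx]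
    push_cast
    field_simp

lemma prime_iff_dvd_fac (m : ℕ) (hm : 2 ≤ m) :
    m ∣ (m - 1).factorial + 1 ↔ m.Prime := by
  haveI : NeZero m := ⟨by omega⟩
  rw [← ZMod.natCast_eq_zero_iff, Nat.cast_add, Nat.cast_one,
    add_eq_zero_iff_eq_neg]
  exact (Nat.prime_iff_fac_equiv_neg_one (n := m) (by omega)).symm

/-- For `n ≥ 3`, `2n` is a sum of two primes iff for some `1 ≤ i ≤ |I_n|` the
product `cos²(π·((2i)!+1)/(2i+1)) · cos²(π·((2n-2-2i)!+1)/(2n-1-2i))` equals 1. -/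
theorem goldbach_iff_cos_sq (n : ℕ) (hn : 3 ≤ n) :
    (∃ p q : ℕ, p.Prime ∧ q.Prime ∧ p + q = 2 * n) ↔
      ∃ i : ℕ, 1 ≤ i ∧ i ≤ In n ∧
        (Real.cos (Real.pi *
            (((Nat.factorial (2 * i) : ℝ) + 1) / ((2 * i + 1 : ℕ) : ℝ)))) ^ 2 *
        (Real.cos (Real.pi *
            (((Nat.factorial (2 * n - 2 - 2 * i) : ℝ) + 1) /
              ((2 * n - 1 - 2 * i : ℕ) : ℝ)))) ^ 2 = 1 := by
  constructor
  · rintro ⟨p, q, hp, hq, hpq⟩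
    obtain ⟨p, q, hp, hq, hpq, hle⟩ :
        ∃ p q : ℕ, p.Prime ∧ q.Prime ∧ p + q = 2 * n ∧ p ≤ q := by
      rcases le_total p q with h | h
      · exact ⟨p, q, hp, hq, hpq, h⟩
      · exact ⟨q, p, hq, hp, by omega, h⟩
    have hp2 : p ≠ 2 := by
      rintro rfl
      have hq2 : q = 2 := ((Nat.Prime.eq_one_or_self_of_dvd hq 2 ⟨n - 1, by omega⟩)).resolve_left (by omega) |>.symm
      omega
    have hq2 : q ≠ 2 := by
      rintro rfl
      have := hp.two_le
      omega
    obtain ⟨i, hpi⟩ : Odd p := hp.odd_of_ne_two hp2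
    have hp3 : 3 ≤ p := by
      have := hp.two_le; omega
    have hi1 : 1 ≤ i := by omega
    have hiIn : i ≤ In n := by
      unfold In; omega
    refine ⟨i, hi1, hiIn, ?_⟩
    have hq3 : 3 ≤ q := by omega
    have hd1 : (2 * i + 1) ∣ (2 * i).factorial + 1 := by
      rw [show (2 * i) = (2 * i + 1) - 1 by omega]
      exact (prime_iff_dvd_fac (2 * i + 1) (by omega)).mpr (by rwa [← hpi])
    have hd2 : (2 * n - 1 - 2 * i) ∣ (2 * n - 2 - 2 * i).factorial + 1 := by
      rw [show (2 * n - 2 - 2 * i) = (2 * n - 1 - 2 * i) - 1 by omega]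
      refine (prime_iff_dvd_fac (2 * n - 1 - 2 * i) (by omega)).mpr ?_
      rwa [show 2 * n - 1 - 2 * i = q by omega]
    have h1 := (cos_sq_pi_div_eq_one_iff ((2 * i).factorial + 1) (2 * i + 1) (by omega)).mpr hd1
    have h2 := (cos_sq_pi_div_eq_one_iff ((2 * n - 2 - 2 * i).factorial + 1)
        (2 * n - 1 - 2 * i) (by omega)).mpr hd2
    push_cast at h1 h2 ⊢
    rw [h1, h2]
    norm_num
  · rintro ⟨i, hi1, hiIn, hprod⟩
    have hIn2 : 2 * i + 1 ≤ n + 1 := by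
      unfold In at hiIn; omega
    set a := (Real.cos (Real.pi *
        (((Nat.factorial (2 * i) : ℝ) + 1) / ((2 * i + 1 : ℕ) : ℝ)))) ^ 2 with ha
    set b := (Real.cos (Real.pi *
        (((Nat.factorial (2 * n - 2 - 2 * i) : ℝ) + 1) /
          ((2 * n - 1 - 2 * i : ℕ) : ℝ)))) ^ 2 with hb
    have ha1 : a ≤ 1 := Real.cos_sq_le_one _
    have hb1 : b ≤ 1 := Real.cos_sq_le_one _
    have ha0 : 0 ≤ a := sq_nonneg _
    have hb0 : 0 ≤ b := sq_nonneg _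
    have haeq : a = 1 := by nlinarith
    have hbeq : b = 1 := by nlinarith
    have h1 : (2 * i + 1) ∣ (2 * i).factorial + 1 := by
      have := (cos_sq_pi_div_eq_one_iff ((2 * i).factorial + 1) (2 * i + 1) (by omega)).mp
        (by rw [ha] at haeq; push_cast at haeq ⊢; convert haeq using 4)
      exact this
    have h2 : (2 * n - 1 - 2 * i) ∣ (2 * n - 2 - 2 * i).factorial + 1 := by
      have := (cos_sq_pi_div_eq_one_iff ((2 * n - 2 - 2 * i).factorial + 1)
          (2 * n - 1 - 2 * i) (by omega)).mp
        (by rw [hb] at hbeq; push_cast at hbeq ⊢; convert hbeq using 4)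
      exact this
    have hp : (2 * i + 1).Prime := by
      rw [← prime_iff_dvd_fac _ (by omega)]
      rwa [show (2 * i + 1) - 1 = 2 * i by omega]
    have hq : (2 * n - 1 - 2 * i).Prime := by
      rw [← prime_iff_dvd_fac _ (by omega)]
      rwa [show (2 * n - 1 - 2 * i) - 1 = 2 * n - 2 - 2 * i by omega]
    exact ⟨2 * i + 1, 2 * n - 1 - 2 * i, hp, hq, by omega⟩
end

section
/- Let n ≥ 3 and let i satisfy 1 ≤ i ≤ |I_n|. If both 2i+1 and 2n-1-2i are prime, then a = ((2i)! + 1)/(2i+1) and b = ((2n-2-2i)! + 1)/(2n-1-2i) are positive natural numbers (i.e., the divisions are exact), and they satisfy the nonlinear diophantine equation b·((2i)! + 1) + a·((2n-2-2i)! + 1) = 2n·a·b. -/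
lemma wilson_dvd (p : ℕ) (hp : Nat.Prime p) : p ∣ Nat.factorial (p - 1) + 1 := by
  haveI := Fact.mk hp
  have h := ZMod.wilsons_lemma p
  have : ((Nat.factorial (p - 1) + 1 : ℕ) : ZMod p) = 0 := by push_cast [h]; ring
  exact (ZMod.natCast_eq_zero_iff _ _).mp this

/-- If `1 ≤ i ≤ |I_n|` and both `2i+1` and `2n-1-2i` are prime, then the
quotients `a = ((2i)!+1)/(2i+1)` and `b = ((2n-2-2i)!+1)/(2n-1-2i)` are exact
positive naturals satisfying the master diophantine equation
`b·((2i)!+1) + a·((2n-2-2i)!+1) = 2n·a·b`. -/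
theorem master_diophantine (n i : ℕ) (hn : 3 ≤ n) (hi1 : 1 ≤ i) (hi2 : i ≤ In n)
    (hp : Nat.Prime (2 * i + 1)) (hq : Nat.Prime (2 * n - 1 - 2 * i)) :
    ∃ a b : ℕ, 0 < a ∧ 0 < b ∧
      a * (2 * i + 1) = Nat.factorial (2 * i) + 1 ∧
      b * (2 * n - 1 - 2 * i) = Nat.factorial (2 * n - 2 - 2 * i) + 1 ∧
      b * (Nat.factorial (2 * i) + 1) + a * (Nat.factorial (2 * n - 2 - 2 * i) + 1) =
        2 * n * a * b := by
  have hle : i ≤ n - 2 := by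
    have : In n ≤ n - 2 := by
      unfold In
      omega
    omega
  have hin : 2 * i + 1 ≤ 2 * n - 1 := by omega
  have hda : (2 * i + 1) ∣ Nat.factorial (2 * i) + 1 := by
    have := wilson_dvd (2 * i + 1) hp
    simpa using this
  have hq1 : 2 * n - 1 - 2 * i - 1 = 2 * n - 2 - 2 * i := by omega
  have hdb : (2 * n - 1 - 2 * i) ∣ Nat.factorial (2 * n - 2 - 2 * i) + 1 := by
    have := wilson_dvd (2 * n - 1 - 2 * i) hq
    rwa [hq1] at this
  obtain ⟨a, ha⟩ := hda
  obtain ⟨b, hb⟩ := hdb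
  refine ⟨a, b, ?_, ?_, ?_, ?_, ?_⟩
  · rcases Nat.eq_zero_or_pos a with h | h
    · simp [h] at ha
    · exact h
  · rcases Nat.eq_zero_or_pos b with h | h
    · simp [h] at hb
    · exact h
  · rw [ha]; ring
  · rw [hb]; ring
  · rw [ha, hb]
    have hpq : (2 * i + 1) + (2 * n - 1 - 2 * i) = 2 * n := by omega
    calc b * ((2 * i + 1) * a) + a * ((2 * n - 1 - 2 * i) * b)
        = ((2 * i + 1) + (2 * n - 1 - 2 * i)) * a * b := by ring
      _ = 2 * n * a * b := by rw [hpq]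
end
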